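/- arXiv:math/0405103 — 4 statements merged into one kernel-verified Lean document; each statement's English description precedes it below -/
import Mathlib

section
/- The restriction map from G_n-invariant polynomial functions on R_n = (gl_n(C))^m to functions on the diagonal locus L_n = {(z,z,...,z) : z ∈ h} ≅ C^n is surjective onto the W_n-invariant polynomials, where W_n = S_n ⋉ (Z/mZ)^n. Specifically, the coefficients of the characteristic polynomial of x_m x_{m-1}···x_1 restrict to the elementary symmetric polynomials in z_1^m, ..., z_n^m. -/
/-!
Write `c_k(x)` for the coefficients of the characteristic polynomial of the cyclic product
`x_m ⋯ x_1`. Replacing `x_k` by `g_{k+1}⁻¹ x_k g_k` conjugates the cyclic product by `g_1`, so the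
`c_k` are `G_n`-invariant, and on the diagonal locus they restrict (up to sign) to the elementary
symmetric polynomials in `z_1^m, …, z_n^m`. Conversely, invariance of `q` under `(ℤ/mℤ)^n` forces
every exponent of `q` to be divisible by `m`, so `q(z) = r(z^m)`; invariance under `S_n` makes `r`
symmetric, hence a polynomial `P` in the elementary symmetric polynomials, and `P(c(x))` is the
required invariant.
-/

open MvPolynomial

section CyclicConjugation

variable {M : Type*} [Monoid M]

theorem List.prod_reverse_ofFn_units_conj_succ (u : ℕ → Mˣ) (x : ℕ → M) :
    ∀ l : ℕ, (List.ofFn fun k : Fin l => (↑(u (k + 1))⁻¹ : M) * x k * u k).reverse.prod =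
      ↑(u l)⁻¹ * (List.ofFn fun k : Fin l => x k).reverse.prod * u 0
  | 0 => by simp
  | l + 1 => by
    rw [List.ofFn_succ', List.ofFn_succ', List.concat_eq_append, List.concat_eq_append,
      List.reverse_append, List.reverse_append]
    simp only [List.reverse_cons, List.reverse_nil, List.nil_append, List.cons_append,
      List.prod_cons, Fin.val_last, Fin.val_castSucc]
    rw [List.prod_reverse_ofFn_units_conj_succ u x l]
    simp only [mul_assoc, Units.mul_inv_cancel_left]

open Fin.NatCast in
theorem List.prod_reverse_ofFn_units_conj_cyclic {m : ℕ} [NeZero m] (g : Fin m → Mˣ)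
    (x : Fin m → M) :
    (List.ofFn fun k : Fin m => (↑(g (k + 1))⁻¹ : M) * x k * g k).reverse.prod =
      ↑(g 0)⁻¹ * (List.ofFn x).reverse.prod * g 0 := by
  have key := List.prod_reverse_ofFn_units_conj_succ (fun j : ℕ => g j) (fun j : ℕ => x j) m
  simp only [Fin.cast_val_eq_self, Nat.cast_add, Nat.cast_one, Fin.natCast_self,
    Nat.cast_zero] at key
  exact key

end CyclicConjugation

namespace MvPolynomial

variable {σ R : Type*} [CommRing R]

theorem eval_bind₁ {τ : Type*} (z : σ → R) (g : τ → MvPolynomial σ R) (φ : MvPolynomial τ R) :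
    eval z (bind₁ g φ) = eval (fun i => eval z (g i)) φ :=
  eval₂Hom_bind₁ _ _ _ _

theorem coeff_aeval_C_mul_X (a : σ → R) (q : MvPolynomial σ R) (d : σ →₀ ℕ) :
    coeff d (aeval (fun j => C (a j) * X j) q) = (d.prod fun j e => a j ^ e) * coeff d q := by
  classical
  induction q using induction_on' with
  | monomial e c =>
    have hmonomial : aeval (fun j => C (a j) * X j) (monomial e c) =
        monomial e ((e.prod fun j k => a j ^ k) * c) := by
      rw [aeval_monomial, monomial_eq, algebraMap_eq, C_mul]
      simp only [mul_pow, Finsupp.prod_mul, ← map_pow, ← map_finsuppProd]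
      ring
    rw [hmonomial, coeff_monomial, coeff_monomial]
    split_ifs with h
    · rw [h]
    · rw [mul_zero]
  | add p q hp hq => simp only [map_add, coeff_add, hp, hq, mul_add]

theorem dvd_of_mem_support_of_eval_mul_eq [IsDomain R] [Infinite R] {p : ℕ} {ζ : R}
    (hζ : IsPrimitiveRoot ζ p) {q : MvPolynomial σ R}
    (hq : ∀ a : σ → R, (∀ i, a i ^ p = 1) → ∀ z, eval (a * z) q = eval z q)
    {d : σ →₀ ℕ} (hd : d ∈ q.support) (i : σ) : p ∣ d i := by
  classical
  set a : σ → R := Pi.mulSingle i ζ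
  have ha : ∀ j, a j ^ p = 1 := by
    intro j
    rcases eq_or_ne j i with rfl | hj
    · simp [a, hζ.pow_eq_one]
    · simp [a, hj]
  have hscale : aeval (fun j => C (a j) * X j) q = q := by
    refine funext fun z => ?_
    rw [← hq a ha z, aeval_eq_bind₁, eval_bind₁]
    simp only [eval_C, eval_X, map_mul]
    rfl
  have hprod : (d.prod fun j e => a j ^ e) = ζ ^ d i :=
    (Finsupp.prod_eq_single i (fun j _ hj => by simp [a, hj]) (by simp)).trans (by simp [a])
  have hcoeff := congrArg (coeff d) hscale
  rw [coeff_aeval_C_mul_X, hprod] at hcoeff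
  exact (hζ.pow_eq_one_iff_dvd _).mp <|
    mul_right_cancel₀ (mem_support_iff.mp hd) (hcoeff.trans (one_mul _).symm)

theorem exists_expand_eq_of_dvd {p : ℕ} {q : MvPolynomial σ R}
    (hq : ∀ d ∈ q.support, ∀ i, p ∣ d i) : ∃ r, expand p r = q := by
  refine ⟨∑ d ∈ q.support, monomial (d.mapRange (· / p) (Nat.zero_div p)) (coeff d q), ?_⟩
  conv_rhs => rw [q.as_sum]
  simp only [map_sum, expand_monomial]
  refine Finset.sum_congr rfl fun d hd => ?_
  rw [show p • d.mapRange (· / p) (Nat.zero_div p) = d from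
    Finsupp.ext fun i => by simp [Nat.mul_div_cancel' (hq d hd i)]]

theorem IsSymmetric.of_expand {p : ℕ} (hp : p ≠ 0) {r : MvPolynomial σ R}
    (h : (expand p r).IsSymmetric) : r.IsSymmetric :=
  fun e => expand_injective (Nat.pos_of_ne_zero hp) (by rw [← rename_expand, h e])

theorem exists_expand_bind₁_esymm_eq [IsDomain R] [Infinite R] {m n : ℕ} [NeZero m] {ζ : R}
    (hζ : IsPrimitiveRoot ζ m) (q : MvPolynomial (Fin n) R)
    (hq : ∀ (σ : Equiv.Perm (Fin n)) (a : Fin n → R), (∀ i, a i ^ m = 1) →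
      ∀ z : Fin n → R, eval (fun i => a i * z (σ⁻¹ i)) q = eval z q) :
    ∃ P : MvPolynomial (Fin n) R,
      expand m (bind₁ (fun k : Fin n => esymm (Fin n) R (k + 1)) P) = q := by
  have htorus : ∀ a : Fin n → R, (∀ i, a i ^ m = 1) → ∀ z, eval (a * z) q = eval z q :=
    fun a ha z => by simpa [Pi.mul_def] using hq 1 a ha z
  obtain ⟨r, rfl⟩ := exists_expand_eq_of_dvd fun d hd i =>
    dvd_of_mem_support_of_eval_mul_eq hζ htorus hd i
  have hsymm : (expand m r).IsSymmetric := fun e => funext fun z => by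
    rw [eval_rename]
    simpa [Function.comp_def] using hq e⁻¹ 1 (fun _ => one_pow m) z
  obtain ⟨P, hP⟩ := esymmAlgHom_surjective R (n := n) (Fintype.card_fin n).le
    ⟨r, hsymm.of_expand (NeZero.ne m)⟩
  have hr := congrArg Subtype.val hP
  rw [esymmAlgHom_apply, aeval_eq_bind₁] at hr
  exact ⟨P, by rw [hr]⟩

end MvPolynomial

namespace Matrix

variable {R : Type*} [CommRing R] {n : ℕ}

/-- By Vieta, the `(k + 1)`-st elementary symmetric function of the eigenvalues. -/
noncomputable def signedCharpolyCoeff (M : Matrix (Fin n) (Fin n) R) (k : Fin n) : R :=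
  (-1) ^ ((k : ℕ) + 1) * M.charpoly.coeff (n - ((k : ℕ) + 1))

theorem signedCharpolyCoeff_units_conj (u : (Matrix (Fin n) (Fin n) R)ˣ)
    (M : Matrix (Fin n) (Fin n) R) :
    signedCharpolyCoeff (u⁻¹.val * M * u.val) = signedCharpolyCoeff M := by
  unfold signedCharpolyCoeff
  rw [coe_units_inv, charpoly_units_conj']

theorem signedCharpolyCoeff_map {S : Type*} [CommRing S] (f : R →+* S)
    (M : Matrix (Fin n) (Fin n) R) :
    signedCharpolyCoeff (M.map f) = f ∘ signedCharpolyCoeff M := by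
  ext k
  simp [signedCharpolyCoeff, charpoly_map]

theorem signedCharpolyCoeff_diagonal (w : Fin n → R) :
    signedCharpolyCoeff (diagonal w) =
      fun k : Fin n => eval w (esymm (Fin n) R ((k : ℕ) + 1)) := by
  ext k
  have hk : n - ((k : ℕ) + 1) ≤ Multiset.card (Finset.univ.val.map w) := by simp
  have hprod : ∏ i, (Polynomial.X - Polynomial.C (w i)) =
      ((Finset.univ.val.map w).map fun t => Polynomial.X - Polynomial.C t).prod := by
    rw [Multiset.map_map]; rfl
  change _ = aeval w _
  rw [signedCharpolyCoeff, charpoly_diagonal, hprod, Multiset.prod_X_sub_C_coeff _ hk,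
    aeval_esymm_eq_multiset_esymm]
  simp only [Multiset.card_map, Finset.card_val, Finset.card_univ, Fintype.card_fin,
    Nat.sub_sub_self k.is_lt, ← mul_assoc, ← mul_pow]
  norm_num

theorem prod_reverse_ofFn_const_diagonal (m : ℕ) (w : Fin n → R) :
    (List.ofFn fun _ : Fin m => diagonal w).reverse.prod = diagonal (w ^ m) := by
  rw [List.ofFn_const, List.reverse_replicate, List.prod_replicate, diagonal_pow]

end Matrix

noncomputable def genericCyclicProduct (m n : ℕ) (R : Type*) [CommRing R] :
    Matrix (Fin n) (Fin n) (MvPolynomial (Fin m × Fin n × Fin n) R) :=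
  (List.ofFn fun k : Fin m => Matrix.of fun i j => X (k, i, j)).reverse.prod

section GenericCyclicProduct

variable {R : Type*} [CommRing R] {n : ℕ}

theorem map_eval_genericCyclicProduct {m : ℕ} (x : Fin m → Matrix (Fin n) (Fin n) R) :
    (genericCyclicProduct m n R).map (eval fun p => x p.1 p.2.1 p.2.2) =
      (List.ofFn x).reverse.prod := by
  rw [genericCyclicProduct, ← RingHom.mapMatrix_apply, map_list_prod, List.map_reverse,
    List.map_ofFn]
  congr 3
  ext k i j
  simp

noncomputable def cyclicProductInvariant (m : ℕ) (P : MvPolynomial (Fin n) R) :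
    MvPolynomial (Fin m × Fin n × Fin n) R :=
  bind₁ (genericCyclicProduct m n R).signedCharpolyCoeff P

theorem eval_cyclicProductInvariant {m : ℕ} (P : MvPolynomial (Fin n) R)
    (x : Fin m → Matrix (Fin n) (Fin n) R) :
    eval (fun p => x p.1 p.2.1 p.2.2) (cyclicProductInvariant m P) =
      eval (List.ofFn x).reverse.prod.signedCharpolyCoeff P := by
  rw [cyclicProductInvariant, eval_bind₁, ← map_eval_genericCyclicProduct x,
    Matrix.signedCharpolyCoeff_map]
  rfl

end GenericCyclicProduct

/-- Surjectivity of the Chevalley restriction map: every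
`W_n`-invariant polynomial `q` in `z₁,…,z_n` is the restriction to the diagonal locus
`L_n = {(diagonal z, …, diagonal z)}` of a `G_n`-invariant polynomial function on
`R_n = (gl_n ℂ)^m`.  Specifically, the characteristic polynomial of
`x_m ⋯ x₁` restricts on `L_n` to `∏ i (X - C (z i ^ m))`, whose coefficients are the
elementary symmetric polynomials in `z₁^m, …, z_n^m`. -/
theorem stmt_4 (m n : ℕ) [NeZero m] :
    (∀ q : MvPolynomial (Fin n) ℂ,
      (∀ (σ : Equiv.Perm (Fin n)) (a : Fin n → ℂ), (∀ i, a i ^ m = 1) →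
        ∀ z : Fin n → ℂ, eval (fun i => a i * z (σ⁻¹ i)) q = eval z q) →
      ∃ f : MvPolynomial (Fin m × Fin n × Fin n) ℂ,
        (∀ (g : Fin m → (Matrix (Fin n) (Fin n) ℂ)ˣ)
            (x : Fin m → Matrix (Fin n) (Fin n) ℂ),
          eval (fun p : Fin m × Fin n × Fin n =>
            ((g (p.1 + 1))⁻¹.val * x p.1 * (g p.1).val) p.2.1 p.2.2) f =
          eval (fun p : Fin m × Fin n × Fin n => x p.1 p.2.1 p.2.2) f) ∧
        (∀ z : Fin n → ℂ,
          eval (fun p : Fin m × Fin n × Fin n =>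
            Matrix.diagonal z p.2.1 p.2.2) f = eval z q)) ∧
    (∀ z : Fin n → ℂ,
      ((List.ofFn fun _ : Fin m => Matrix.diagonal z).reverse.prod).charpoly =
        ∏ i, (Polynomial.X - Polynomial.C (z i ^ m))) := by
  refine ⟨fun q hq => ?_, fun z => ?_⟩
  · obtain ⟨P, rfl⟩ := exists_expand_bind₁_esymm_eq
      (Complex.isPrimitiveRoot_exp m (NeZero.ne m)) q hq
    refine ⟨cyclicProductInvariant m P, fun g x => ?_, fun z => ?_⟩
    · rw [eval_cyclicProductInvariant P fun k => (g (k + 1))⁻¹.val * x k * (g k).val,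
        eval_cyclicProductInvariant P x, List.prod_reverse_ofFn_units_conj_cyclic,
        Matrix.signedCharpolyCoeff_units_conj]
    · rw [eval_cyclicProductInvariant P fun _ => Matrix.diagonal z,
        Matrix.prod_reverse_ofFn_const_diagonal, eval_expand, eval_bind₁,
        Matrix.signedCharpolyCoeff_diagonal]
  · rw [Matrix.prod_reverse_ofFn_const_diagonal, Matrix.charpoly_diagonal]
    rfl
end

section
/- The restriction map C[R_n]^{G_n} → C[L_n]^{W_n} is injective, i.e., a G_n-invariant polynomial on (gl_n(C))^m vanishing on the diagonal locus L_n vanishes identically. -/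
/-!
A function that is polynomial along every affine line and takes a value `c` at all but finitely
many points of a line takes it everywhere on that line. Since `x + t • 1` is a tuple of invertible
matrices for all but finitely many `t`, it suffices to treat invertible tuples.

Gauging an invertible tuple by the partial products `x (i - 1) ⋯ x 0` turns it into
`(1, …, 1, y)` with `y = x (m - 1) ⋯ x 0`, and `G y := f (1, …, 1, y)` is a
conjugation-invariant function on `gl_n`. For invertible diagonal `y = diag w`, the tuple
`(1, …, 1, diag w)` is in the orbit of the constant tuple `diag b` with `b ^ m = w`, where `f`
vanishes; the line argument extends this to all diagonal `y`.

Finally, a conjugation-invariant `G` vanishing on diagonal matrices vanishes, by induction on `n`: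
conjugate `y` so that a basis vector is an eigenvector, i.e. `y = [[C, 0], [r, μ]]`. Conjugating
by `diag(s • 1, 1)` replaces `r` by `s • r`, so `G y` does not depend on `r`, and
`C ↦ G [[C, 0], [0, μ]]` is a function of the same kind in dimension `n - 1`.
-/

open MvPolynomial

/-- Evaluation of a polynomial function on `R_n = (gl_n ℂ)^m` at a tuple of matrices. -/
noncomputable def evalRep (m n : ℕ) (f : MvPolynomial (Fin m × Fin n × Fin n) ℂ)
    (x : Fin m → Matrix (Fin n) (Fin n) ℂ) : ℂ :=
  eval (fun p => x p.1 p.2.1 p.2.2) f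

open Filter Matrix

/-- The only feature of polynomial functions that the density arguments use. -/
def IsPolynomialOnLines {K V : Type*} [CommSemiring K] [AddCommMonoid V] [Module K V]
    (F : V → K) : Prop :=
  ∀ a b : V, ∃ q : Polynomial K, ∀ t : K, F (a + t • b) = q.eval t

namespace IsPolynomialOnLines

variable {K V W : Type*} [AddCommMonoid V] [AddCommMonoid W]

theorem comp [CommSemiring K] [Module K V] [Module K W] {F : V → K} (hF : IsPolynomialOnLines F)
    (φ ψ : W → V) (hφ : ∀ a b (t : K), φ (a + t • b) = φ a + t • ψ b) :
    IsPolynomialOnLines (F ∘ φ) := fun a b => by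
  obtain ⟨q, hq⟩ := hF (φ a) (ψ b)
  exact ⟨q, fun t => by rw [Function.comp_apply, hφ, hq]⟩

theorem eq_of_eventually_eq [Field K] [Infinite K] [Module K V] {F : V → K}
    (hF : IsPolynomialOnLines F) {a b : V} {c : K}
    (h : ∀ᶠ t : K in cofinite, F (a + t • b) = c) : F a = c := by
  obtain ⟨q, hq⟩ := hF a b
  have hroots : {t | (q - Polynomial.C c).IsRoot t}.Infinite := by
    refine frequently_cofinite_iff_infinite.1 (h.mono fun t ht => ?_).frequently
    simp [← hq, ht]
  have hq0 := Polynomial.eq_zero_of_infinite_isRoot _ hroots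
  rw [sub_eq_zero] at hq0
  simpa [hq0] using hq 0

end IsPolynomialOnLines

theorem IsPolynomialOnLines.comp_mulSingle {K A ι : Type*} [CommSemiring K] [Semiring A]
    [Module K A] [DecidableEq ι] {F : (ι → A) → K} (hF : IsPolynomialOnLines F) (i : ι) :
    IsPolynomialOnLines (F ∘ Pi.mulSingle i) := by
  refine hF.comp _ (Pi.single (M := fun _ => A) i) fun a b t => funext fun j => ?_
  by_cases hj : j = i
  · subst hj
    simp
  · simp [hj]

theorem MvPolynomial.isPolynomialOnLines_eval {K σ : Type*} [CommSemiring K]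
    (f : MvPolynomial σ K) : IsPolynomialOnLines fun a : σ → K => eval a f := fun a b =>
  ⟨eval₂ Polynomial.C (fun s => Polynomial.C (a s) + Polynomial.X * Polynomial.C (b s)) f,
    fun t => by
      rw [polynomial_eval_eval₂]
      have hC : (Polynomial.evalRingHom t).comp Polynomial.C = RingHom.id K := by ext; simp
      have hline : (fun s => (Polynomial.C (a s) + Polynomial.X * Polynomial.C (b s)).eval t) =
          a + t • b := by ext s; simp [mul_comm (b s)]
      rw [hC, hline]
      rfl⟩

theorem isPolynomialOnLines_evalRep (m n : ℕ) (f : MvPolynomial (Fin m × Fin n × Fin n) ℂ) :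
    IsPolynomialOnLines (evalRep m n f) := by
  let entries (x : Fin m → Matrix (Fin n) (Fin n) ℂ) (p : Fin m × Fin n × Fin n) : ℂ :=
    x p.1 p.2.1 p.2.2
  exact f.isPolynomialOnLines_eval.comp entries entries fun _ _ _ => rfl

theorem Matrix.eventually_isUnit_add_smul_one {ι K : Type*} [Fintype ι] [DecidableEq ι] [Field K]
    (A : Matrix ι ι K) : ∀ᶠ t : K in cofinite, IsUnit (A + t • 1) := by
  filter_upwards [(A.finite_spectrum.preimage neg_injective.injOn).eventually_cofinite_notMem]
    with t ht
  rw [Set.mem_preimage, spectrum.mem_iff, not_not, Algebra.algebraMap_eq_smul_one] at ht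
  simpa [sub_eq_neg_add, add_comm] using ht.neg

section Conjugation

variable {M X : Type*} [Monoid M]

def IsConjInvariant (G : M → X) : Prop :=
  ∀ (P : Mˣ) (y : M), G (P⁻¹.val * y * P.val) = G y

variable {m : ℕ} [NeZero m]

def IsCyclicConjInvariant (F : (Fin m → M) → X) : Prop :=
  ∀ (g : Fin m → Mˣ) (x : Fin m → M),
    F (fun i => (g (i + 1))⁻¹.val * x i * (g i).val) = F x

open Fin.NatCast in
/-- `pathProd u k = u (k - 1) * ⋯ * u 1 * u 0`, the indices read modulo `m`. -/
def pathProd (u : Fin m → Mˣ) : ℕ → Mˣ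
  | 0 => 1
  | k + 1 => u k * pathProd u k

theorem pathProd_const (a : Mˣ) (k : ℕ) : pathProd (fun _ : Fin m => a) k = a ^ k := by
  induction k with
  | zero => exact (pow_zero a).symm
  | succ k ih => rw [pathProd, ih, pow_succ']

theorem pathProd_val_add_one (u : Fin m → Mˣ) (i : Fin m) :
    pathProd u ((i : ℕ) + 1) = u i * pathProd u i := by
  rw [pathProd, Fin.cast_val_eq_self]

theorem Fin.val_add_one_eq_mod (i : Fin m) : ((i + 1 : Fin m) : ℕ) = (i + 1) % m := by
  simp [Fin.val_add, Nat.add_mod]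

theorem Fin.val_add_one_of_add_one_ne_zero {i : Fin m} (h : i + 1 ≠ 0) :
    ((i + 1 : Fin m) : ℕ) = i + 1 := by
  apply Fin.val_add_one_of_lt'
  by_contra h'
  apply h
  ext
  rw [Fin.val_add_one_eq_mod, show (i : ℕ) + 1 = m by omega]
  simp

theorem Fin.val_add_one_of_add_one_eq_zero {i : Fin m} (h : i + 1 = 0) : (i : ℕ) + 1 = m := by
  have hval := congrArg Fin.val h
  rw [Fin.val_add_one_eq_mod, Fin.val_zero] at hval
  have := i.isLt
  by_contra h'
  rw [Nat.mod_eq_of_lt (by omega)] at hval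
  omega

namespace IsCyclicConjInvariant

variable {F : (Fin m → M) → X}

/-- Gauge the tuple by the partial products `g i = u (i - 1) * ⋯ * u 0`: every arrow but the
last one becomes `1`, and the last one carries the whole product. -/
theorem apply_units (hF : IsCyclicConjInvariant F) (u : Fin m → Mˣ) :
    F (fun i => u i) = F (Pi.mulSingle (-1) (pathProd u m : M)) := by
  rw [← hF (fun i => pathProd u i)]
  congr 1
  funext i
  by_cases hi : i + 1 = 0
  · rw [← congrArg (fun k => (pathProd u k : M)) (Fin.val_add_one_of_add_one_eq_zero hi),
      hi, pathProd_val_add_one, eq_neg_of_add_eq_zero_left hi, Pi.mulSingle_eq_same]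
    simp [pathProd]
  · rw [Pi.mulSingle_eq_of_ne (fun h => hi (by rw [h, neg_add_cancel])),
      Fin.val_add_one_of_add_one_ne_zero hi, pathProd_val_add_one]
    simp [mul_assoc]

theorem isConjInvariant_mulSingle (hF : IsCyclicConjInvariant F) :
    IsConjInvariant fun y : M => F (Pi.mulSingle (-1) y) := fun P y => by
  beta_reduce
  rw [← hF (fun _ => P) (Pi.mulSingle (-1) y)]
  congr 1
  funext i
  by_cases hi : i = -1
  · subst hi
    simp
  · simp [Pi.mulSingle_eq_of_ne hi]

end IsCyclicConjInvariant

end Conjugation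

section MatrixConjugation

variable {K X ι α β : Type*} [Fintype ι] [DecidableEq ι] [Fintype α] [DecidableEq α]
  [Fintype β] [DecidableEq β]

theorem Matrix.exists_units_conj_col_eq_zero [Field K] [IsAlgClosed K] [Nonempty ι]
    (y : Matrix ι ι K) :
    ∃ (P : (Matrix ι ι K)ˣ) (k : ι), ∀ i ≠ k, (P⁻¹.val * y * P.val) i k = 0 := by
  obtain ⟨μ, hμ⟩ := Module.End.exists_eigenvalue (toLin' y)
  obtain ⟨v, hv⟩ := hμ.exists_hasEigenvector
  have hyv : y *ᵥ v = μ • v := by simpa using hv.apply_eq_smul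
  obtain ⟨k, hk⟩ : ∃ k, v k ≠ 0 := Function.ne_iff.1 hv.2
  obtain ⟨P, hP⟩ : ∃ P : (Matrix ι ι K)ˣ, P.val = (1 : Matrix ι ι K).updateCol k v := by
    have hdet : IsUnit ((1 : Matrix ι ι K).updateCol k v) := by
      rw [isUnit_iff_isUnit_det, ← cramer_apply, cramer_one]
      exact hk.isUnit
    exact ⟨hdet.unit, rfl⟩
  have hPe : P.val *ᵥ Pi.single k 1 = v := by
    ext i
    simp [hP, mulVec_single]
  have hcol : (P⁻¹.val * y * P.val) *ᵥ Pi.single k 1 = μ • Pi.single k 1 := by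
    rw [← mulVec_mulVec, hPe, ← mulVec_mulVec, hyv, mulVec_smul, ← hPe, mulVec_mulVec,
      Units.inv_mul, one_mulVec]
  refine ⟨P, k, fun i hi => ?_⟩
  simpa [mulVec_single, hi] using congrFun hcol i

section Semiring

variable [Semiring K]

theorem IsConjInvariant.comp_reindex {G : Matrix ι ι K → X} (hG : IsConjInvariant G)
    (e : α ≃ ι) : IsConjInvariant (G ∘ reindex e e) := fun P y => by
  have hmul (A B : Matrix α α K) : reindex e e (A * B) = reindex e e A * reindex e e B :=
    map_mul (reindexAlgEquiv ℕ K e) A B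
  rw [Function.comp_apply, hmul, hmul]
  exact hG (Units.map (reindexAlgEquiv ℕ K e).toMonoidHom P) (reindex e e y)

def Matrix.blockDiagUnit (P : (Matrix α α K)ˣ) : (Matrix (α ⊕ β) (α ⊕ β) K)ˣ where
  val := fromBlocks P 0 0 1
  inv := fromBlocks ↑P⁻¹ 0 0 1
  val_inv := by simp [fromBlocks_multiply]
  inv_val := by simp [fromBlocks_multiply]

theorem IsConjInvariant.comp_fromBlocks {G : Matrix (α ⊕ β) (α ⊕ β) K → X}
    (hG : IsConjInvariant G) (D : Matrix β β K) :
    IsConjInvariant fun C : Matrix α α K => G (fromBlocks C 0 0 D) := fun P y => by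
  simpa [blockDiagUnit, fromBlocks_multiply, Matrix.mul_assoc] using
    hG (blockDiagUnit P) (fromBlocks y 0 0 D)

end Semiring

variable [Field K]

/-- Conjugating by `diag(s • 1, 1)` replaces `r` by `s • r`; as a polynomial in `s` that is
constant for `s ≠ 0`, this is constant. -/
theorem IsConjInvariant.apply_fromBlocks_eq [Infinite K]
    {G : Matrix (α ⊕ β) (α ⊕ β) K → K} (hG : IsConjInvariant G)
    (hpoly : IsPolynomialOnLines G) (C : Matrix α α K) (r : Matrix β α K) (D : Matrix β β K) :
    G (fromBlocks C 0 r D) = G (fromBlocks C 0 0 D) := by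
  refine (hpoly.eq_of_eventually_eq (b := fromBlocks 0 0 r 0) ?_).symm
  filter_upwards [eventually_cofinite_ne 0] with s hs
  let S : (Matrix α α K)ˣ :=
    Units.map (algebraMap K (Matrix α α K)).toMonoidHom (Units.mk0 s hs)
  rw [← hG (blockDiagUnit S) (fromBlocks C 0 r D)]
  congr 1
  simp [blockDiagUnit, S, fromBlocks_multiply, fromBlocks_add, fromBlocks_smul,
    Algebra.algebraMap_eq_smul_one, smul_smul, hs]

theorem IsConjInvariant.apply_fromBlocks_eq_zero [Infinite K]
    {G : Matrix (α ⊕ β) (α ⊕ β) K → K} (hG : IsConjInvariant G)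
    (hpoly : IsPolynomialOnLines G) (hdiag : ∀ w, G (diagonal w) = 0)
    (ih : ∀ G' : Matrix α α K → K, IsConjInvariant G' → IsPolynomialOnLines G' →
      (∀ w, G' (diagonal w) = 0) → ∀ y, G' y = 0)
    (C : Matrix α α K) (r : Matrix β α K) (d : β → K) :
    G (fromBlocks C 0 r (diagonal d)) = 0 := by
  rw [hG.apply_fromBlocks_eq hpoly]
  refine ih (fun C => G (fromBlocks C 0 0 (diagonal d))) (hG.comp_fromBlocks _) ?_ (fun w => ?_) C
  · exact hpoly.comp (fun C => fromBlocks C 0 0 (diagonal d)) (fun C => fromBlocks C 0 0 0)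
      fun a b t => by simp [fromBlocks_add, fromBlocks_smul]
  · rw [fromBlocks_diagonal]
    exact hdiag _

theorem IsConjInvariant.eq_zero [IsAlgClosed K] {G : Matrix ι ι K → K} (hG : IsConjInvariant G)
    (hpoly : IsPolynomialOnLines G) (hdiag : ∀ w, G (diagonal w) = 0) (y : Matrix ι ι K) :
    G y = 0 := by
  induction h : Fintype.card ι generalizing ι with
  | zero =>
    have := Fintype.card_eq_zero_iff.1 h
    rw [Subsingleton.elim y (diagonal 0)]
    exact hdiag 0
  | succ n ih =>
    have : Nonempty ι := Fintype.card_pos_iff.1 (by omega)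
    obtain ⟨P, k, hk⟩ := exists_units_conj_col_eq_zero y
    let e := Equiv.sumCompl (· ≠ k)
    set B := reindex e.symm e.symm (P⁻¹.val * y * P.val) with hB
    have hB₁₂ : B.toBlocks₁₂ = 0 := by
      ext i ⟨j, hj⟩
      obtain rfl := not_not.1 hj
      exact hk i i.2
    have hB₂₂ : B.toBlocks₂₂ = diagonal fun j => B.toBlocks₂₂ j j := by
      ext i j
      rw [show i = j from Subtype.ext ((not_not.1 i.2).trans (not_not.1 j.2).symm),
        diagonal_apply_eq]
    rw [← hG P y, ← (reindex e e).apply_symm_apply (P⁻¹.val * y * P.val), reindex_symm,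
      ← hB, ← fromBlocks_toBlocks B, hB₁₂, hB₂₂]
    refine (hG.comp_reindex e).apply_fromBlocks_eq_zero ?_ ?_ ?_ _ _ _
    · exact hpoly.comp _ (reindex e e) fun a b t => rfl
    · intro w
      simpa [reindex_apply, submatrix_diagonal_equiv] using hdiag _
    · exact fun G' hG' hpoly' hdiag' y' => ih hG' hpoly' hdiag' y' (by simp [h])

end MatrixConjugation

namespace IsCyclicConjInvariant

variable {K ι : Type*} [Field K] [IsAlgClosed K] [Fintype ι] [DecidableEq ι] {m : ℕ} [NeZero m]
  {F : (Fin m → Matrix ι ι K) → K}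

theorem exists_apply_mulSingle_diagonal_eq (hF : IsCyclicConjInvariant F) (w : ι → K)
    (hw : IsUnit w) :
    ∃ b : ι → K, F (Pi.mulSingle (-1) (diagonal w)) = F fun _ => diagonal b := by
  choose b hb using fun i => IsAlgClosed.exists_pow_nat_eq (w i) (Nat.pos_of_neZero m)
  have hbu : IsUnit (diagonal b) := by
    rw [isUnit_diagonal, Pi.isUnit_iff]
    intro i
    rw [← isUnit_pow_iff (NeZero.ne m), hb]
    exact Pi.isUnit_iff.1 hw i
  refine ⟨b, Eq.trans ?_ (hF.apply_units fun _ => hbu.unit).symm⟩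
  rw [pathProd_const, Units.val_pow_eq_pow_val, IsUnit.unit_spec, diagonal_pow]
  congr
  funext i
  exact (hb i).symm

theorem apply_mulSingle_diagonal_eq_zero (hF : IsCyclicConjInvariant F)
    (hpoly : IsPolynomialOnLines F) (hvan : ∀ z, F (fun _ => diagonal z) = 0) (w : ι → K) :
    F (Pi.mulSingle (-1) (diagonal w)) = 0 := by
  refine (hpoly.comp_mulSingle (-1)).eq_of_eventually_eq (b := 1)
    ((diagonal w).eventually_isUnit_add_smul_one.mono fun t ht => ?_)
  rw [smul_one_eq_diagonal, diagonal_add, isUnit_diagonal] at ht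
  rw [Function.comp_apply, smul_one_eq_diagonal, diagonal_add]
  obtain ⟨b, hb⟩ := hF.exists_apply_mulSingle_diagonal_eq _ ht
  exact hb.trans (hvan b)

theorem eq_zero (hF : IsCyclicConjInvariant F) (hpoly : IsPolynomialOnLines F)
    (hvan : ∀ z, F (fun _ => diagonal z) = 0) (x : Fin m → Matrix ι ι K) : F x = 0 := by
  have hlast (y : Matrix ι ι K) : F (Pi.mulSingle (-1) y) = 0 :=
    hF.isConjInvariant_mulSingle.eq_zero (hpoly.comp_mulSingle (-1))
      (hF.apply_mulSingle_diagonal_eq_zero hpoly hvan) y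
  refine hpoly.eq_of_eventually_eq (b := 1) ((eventually_all.2 fun i =>
    (x i).eventually_isUnit_add_smul_one).mono fun t ht => ?_)
  have hx : x + t • 1 = fun i => ((ht i).unit : Matrix ι ι K) :=
    funext fun i => (ht i).unit_spec.symm
  rw [hx, hF.apply_units]
  exact hlast _

end IsCyclicConjInvariant

/-- Injectivity of the Chevalley restriction map: a `G_n`-invariant
polynomial function on `R_n = (gl_n ℂ)^m` (cyclic base-change action of `GL_n(ℂ)^m`)
which vanishes on the diagonal locus `L_n = {(diagonal z, …, diagonal z)}`
vanishes identically. -/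
theorem stmt_6 (m n : ℕ) [NeZero m] (f : MvPolynomial (Fin m × Fin n × Fin n) ℂ)
    (hinv : ∀ (g : Fin m → (Matrix (Fin n) (Fin n) ℂ)ˣ)
        (x : Fin m → Matrix (Fin n) (Fin n) ℂ),
      evalRep m n f (fun i => (g (i + 1))⁻¹.val * x i * (g i).val) = evalRep m n f x)
    (hvan : ∀ z : Fin n → ℂ, evalRep m n f (fun _ => Matrix.diagonal z) = 0) :
    ∀ x : Fin m → Matrix (Fin n) (Fin n) ℂ, evalRep m n f x = 0 :=
  IsCyclicConjInvariant.eq_zero hinv (isPolynomialOnLines_evalRep m n f) hvan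
end

section
/- The algebra of W_n-invariant polynomial functions on C^n × C^n (coordinates z_1,...,z_n, z'_1,...,z'_n), where W_n = S_n ⋉ (Z/mZ)^n acts diagonally (S_n permuting pairs (z_i, z'_i) simultaneously and the i-th Z/mZ factor scaling z_i by ζ and z'_i by ζ^{-1}), is generated by the power sums p_{r,s} = Σ_i z_i^r (z'_i)^s over all r, s ≥ 0 with r ≡ s (mod m). -/
open MvPolynomial Finset

noncomputable def pwr (n r s : ℕ) : MvPolynomial (Fin n ⊕ Fin n) ℂ :=
  ∑ i : Fin n, X (Sum.inl i) ^ r * X (Sum.inr i) ^ s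

noncomputable def Msum (n k : ℕ) (α β : Fin k → ℕ) : MvPolynomial (Fin n ⊕ Fin n) ℂ :=
  ∑ f ∈ Finset.univ.filter (fun f : Fin k → Fin n => Function.Injective f),
    ∏ j : Fin k, X (Sum.inl (f j)) ^ α j * X (Sum.inr (f j)) ^ β j

lemma Msum_zero (n : ℕ) (α β : Fin 0 → ℕ) : Msum n 0 α β = 1 := by
  rw [Msum]
  rw [Finset.filter_true_of_mem (fun f _ => Function.injective_of_subsingleton f)]
  simp

lemma Msum_succ (n k : ℕ) (α β : Fin (k+1) → ℕ) :
    Msum n (k+1) α β =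
      pwr n (α (Fin.last k)) (β (Fin.last k)) *
        Msum n k (α ∘ Fin.castSucc) (β ∘ Fin.castSucc)
      - ∑ j : Fin k,
          Msum n k (fun j' => α (Fin.castSucc j') + if j' = j then α (Fin.last k) else 0)
                   (fun j' => β (Fin.castSucc j') + if j' = j then β (Fin.last k) else 0) := by
  rw [eq_sub_iff_add_eq]
  set T : (Fin k → Fin n) → Fin n → MvPolynomial (Fin n ⊕ Fin n) ℂ := fun f i =>
    (X (Sum.inl i) ^ α (Fin.last k) * X (Sum.inr i) ^ β (Fin.last k)) *
      ∏ j : Fin k, X (Sum.inl (f j)) ^ α (Fin.castSucc j) * X (Sum.inr (f j)) ^ β (Fin.castSucc j)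
    with hT
  have hrhs : pwr n (α (Fin.last k)) (β (Fin.last k)) *
      Msum n k (α ∘ Fin.castSucc) (β ∘ Fin.castSucc)
      = ∑ f ∈ Finset.univ.filter (fun f : Fin k → Fin n => Function.Injective f),
          ∑ i : Fin n, T f i := by
    rw [pwr, Msum, Finset.sum_mul_sum]
    rw [Finset.sum_comm]
    rfl
  rw [hrhs]
  have hsplit : ∀ f ∈ Finset.univ.filter (fun f : Fin k → Fin n => Function.Injective f),
      ∑ i : Fin n, T f i =
        (∑ i ∈ Finset.univ \ Finset.image f Finset.univ, T f i) + ∑ j : Fin k, T f (f j) := by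
    intro f hf
    rw [Finset.mem_filter] at hf
    have himg : ∑ i ∈ Finset.image f Finset.univ, T f i = ∑ j : Fin k, T f (f j) :=
      Finset.sum_image (fun x _ y _ h => hf.2 h)
    rw [← Finset.sum_sdiff (Finset.subset_univ (Finset.image f Finset.univ)), himg]
  rw [Finset.sum_congr rfl hsplit, Finset.sum_add_distrib]
  congr 1
  · -- Msum (k+1) = sum over (f, new variable i)
    have hsig := Finset.sum_sigma
      (Finset.univ.filter fun f : Fin k → Fin n => Function.Injective f)
      (fun f => Finset.univ \ Finset.image f Finset.univ)
      (fun p : Σ _ : Fin k → Fin n, Fin n => T p.1 p.2)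
    rw [Msum, ← hsig]
    refine Finset.sum_nbij' (fun F => ⟨Fin.init F, F (Fin.last k)⟩)
      (fun p => Fin.snoc p.1 p.2) ?_ ?_ ?_ ?_ ?_
    · intro F hF
      simp only [Finset.mem_filter, Finset.mem_univ, true_and] at hF
      simp only [Finset.mem_sigma, Finset.mem_filter, Finset.mem_univ, true_and,
        Finset.mem_sdiff, Finset.mem_image]
      refine ⟨fun x y hxy => ?_, ?_⟩
      · exact Fin.castSucc_injective k (hF (show F x.castSucc = F y.castSucc from hxy))
      · rintro ⟨x, hx⟩
        have := hF (show F x.castSucc = F (Fin.last k) from hx)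
        exact absurd this (Fin.ne_last_of_lt (Fin.castSucc_lt_last x))
    · rintro ⟨f, i⟩ hp
      simp only [Finset.mem_sigma, Finset.mem_filter, Finset.mem_univ, true_and,
        Finset.mem_sdiff, Finset.mem_image] at hp
      obtain ⟨hfinj, hi⟩ := hp
      simp only [Finset.mem_filter, Finset.mem_univ, true_and]
      intro x y hxy
      rcases Fin.eq_castSucc_or_eq_last x with ⟨x', rfl⟩ | rfl <;>
        rcases Fin.eq_castSucc_or_eq_last y with ⟨y', rfl⟩ | rfl
      · simp only [Fin.snoc_castSucc] at hxy
        exact congrArg _ (hfinj hxy)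
      · simp only [Fin.snoc_castSucc, Fin.snoc_last] at hxy
        exact absurd ⟨x', hxy⟩ hi
      · simp only [Fin.snoc_castSucc, Fin.snoc_last] at hxy
        exact absurd ⟨y', hxy.symm⟩ hi
      · rfl
    · intro F _
      exact Fin.snoc_init_self F
    · rintro ⟨f, i⟩ -
      simp [Fin.init_snoc, Fin.snoc_last]
    · intro F _
      rw [hT]
      simp only
      rw [Fin.prod_univ_castSucc]
      simp only [Fin.init]
      ring
  · -- merged part
    rw [Finset.sum_comm]
    refine Finset.sum_congr rfl fun j _ => ?_
    rw [Msum]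
    refine Finset.sum_congr rfl fun f hf => ?_
    rw [hT]
    simp only
    have key : ∀ j' : Fin k,
        (X (Sum.inl (f j')) : MvPolynomial (Fin n ⊕ Fin n) ℂ) ^ (α (Fin.castSucc j') + if j' = j then α (Fin.last k) else 0) *
        X (Sum.inr (f j')) ^ (β (Fin.castSucc j') + if j' = j then β (Fin.last k) else 0)
        = (X (Sum.inl (f j')) ^ α (Fin.castSucc j') * X (Sum.inr (f j')) ^ β (Fin.castSucc j')) *
          (if j' = j then X (Sum.inl (f j')) ^ α (Fin.last k) * X (Sum.inr (f j')) ^ β (Fin.last k)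
            else 1) := by
      intro j'
      split_ifs with h
      · rw [pow_add, pow_add]; ring
      · simp
    rw [Finset.prod_congr rfl fun j' _ => key j', Finset.prod_mul_distrib,
      Finset.prod_ite_eq' Finset.univ j
        (fun j' => X (Sum.inl (f j')) ^ α (Fin.last k) * X (Sum.inr (f j')) ^ β (Fin.last k))]
    simp only [Finset.mem_univ, if_true]
    ring

lemma pwr_mem (m n r s : ℕ) (h : r ≡ s [MOD m]) :
    pwr n r s ∈ Algebra.adjoin ℂ {q : MvPolynomial (Fin n ⊕ Fin n) ℂ |
      ∃ r s : ℕ, r ≡ s [MOD m] ∧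
        q = ∑ i : Fin n,
          (X (Sum.inl i) : MvPolynomial (Fin n ⊕ Fin n) ℂ) ^ r * X (Sum.inr i) ^ s} :=
  Algebra.subset_adjoin ⟨r, s, h, rfl⟩

lemma Msum_mem (m n k : ℕ) (α β : Fin k → ℕ) (h : ∀ j, α j ≡ β j [MOD m]) :
    Msum n k α β ∈ Algebra.adjoin ℂ {q : MvPolynomial (Fin n ⊕ Fin n) ℂ |
      ∃ r s : ℕ, r ≡ s [MOD m] ∧
        q = ∑ i : Fin n,
          (X (Sum.inl i) : MvPolynomial (Fin n ⊕ Fin n) ℂ) ^ r * X (Sum.inr i) ^ s} := by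
  induction k with
  | zero => rw [Msum_zero]; exact one_mem _
  | succ k ih =>
    rw [Msum_succ]
    refine sub_mem (mul_mem (pwr_mem m n _ _ (h (Fin.last k))) (ih _ _ fun j => h _)) ?_
    refine sum_mem fun j _ => ih _ _ fun j' => ?_
    by_cases hj : j' = j
    · simp only [hj, if_true]
      exact Nat.ModEq.add (h _) (h _)
    · simp only [hj, if_false]
      simpa using (h j'.castSucc).add_right 0

lemma bind₁_scale (n : ℕ) (a : Fin n → ℂ) (d : (Fin n ⊕ Fin n) →₀ ℕ) (c : ℂ) :
    bind₁ (Sum.elim (fun i => C (a i) * X (Sum.inl i))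
      (fun i => C (a i)⁻¹ * X (Sum.inr i))) (monomial d c)
    = monomial d (c * ∏ i : Fin n, a i ^ d (Sum.inl i) * (a i)⁻¹ ^ d (Sum.inr i)) := by
  have hmono : ∀ e : ℂ, (monomial d e : MvPolynomial (Fin n ⊕ Fin n) ℂ)
      = C e * ∏ x : Fin n ⊕ Fin n, X x ^ d x := by
    intro e
    rw [monomial_eq]
    congr 1
    exact Finsupp.prod_fintype _ _ fun x => pow_zero _
  rw [hmono c, hmono, map_mul, map_prod]
  simp only [map_pow, bind₁_X_right, algHom_C]
  rw [Fintype.prod_sum_type, Fintype.prod_sum_type]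
  simp only [Sum.elim_inl, Sum.elim_inr, mul_pow, ← C_pow, Finset.prod_mul_distrib,
    ← map_prod (C : ℂ →+* MvPolynomial (Fin n ⊕ Fin n) ℂ), algebraMap_eq, C_mul]
  ring

lemma monomial_eq_prod' (n : ℕ) (d : (Fin n ⊕ Fin n) →₀ ℕ) (e : ℂ) :
    (monomial d e : MvPolynomial (Fin n ⊕ Fin n) ℂ) = C e * ∏ x : Fin n ⊕ Fin n, X x ^ d x := by
  rw [monomial_eq]
  congr 1
  exact Finsupp.prod_fintype _ _ fun x => pow_zero _

lemma sum_rename_monomial (n : ℕ) (d : (Fin n ⊕ Fin n) →₀ ℕ) (c : ℂ) :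
    ∑ σ : Equiv.Perm (Fin n), rename (Sum.map ⇑σ ⇑σ) (monomial d c)
      = c • Msum n n (fun i => d (Sum.inl i)) (fun i => d (Sum.inr i)) := by
  have hval : ∀ σ : Equiv.Perm (Fin n),
      rename (Sum.map ⇑σ ⇑σ) (monomial d c)
        = c • ∏ i : Fin n, X (Sum.inl (σ i)) ^ d (Sum.inl i) * X (Sum.inr (σ i)) ^ d (Sum.inr i) := by
    intro σ
    rw [monomial_eq_prod', map_mul, map_prod, algHom_C, smul_eq_C_mul]
    congr 1
    simp only [map_pow, rename_X]
    rw [Fintype.prod_sum_type]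
    simp only [Sum.map_inl, Sum.map_inr, ← Finset.prod_mul_distrib]
  rw [Msum, Finset.smul_sum]
  rw [Finset.sum_congr rfl fun σ _ => hval σ]
  refine Finset.sum_bij (fun (σ : Equiv.Perm (Fin n)) _ => ⇑σ) ?_ ?_ ?_ ?_
  · intro σ _
    simp only [Finset.mem_filter, Finset.mem_univ, true_and]
    exact σ.injective
  · intro σ₁ _ σ₂ _ h
    exact Equiv.coe_fn_injective h
  · intro f hf
    simp only [Finset.mem_filter, Finset.mem_univ, true_and] at hf
    exact ⟨Equiv.ofBijective f (Finite.injective_iff_bijective.1 hf), Finset.mem_univ _, rfl⟩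
  · intro σ _
    rfl


set_option maxHeartbeats 2000000 in
/-- **Weyl's theorem for the wreath product.**  A polynomial on
`ℂ^n × ℂ^n` (variables `z_i = X (inl i)`, `z'_i = X (inr i)`) is invariant under the
diagonal action of `W_n = S_n ⋉ (ℤ/mℤ)^n` (simultaneous permutation of the pairs
`(z_i, z'_i)`, and scaling `(z_i, z'_i) ↦ (ζ z_i, ζ⁻¹ z'_i)` by `m`-th roots of unity)
iff it lies in the subalgebra generated by the power sums
`p_{r,s} = ∑ i, z_i^r (z'_i)^s` for `r ≡ s (mod m)`. -/
theorem stmt_9 (m n : ℕ) (hm : 0 < m) (P : MvPolynomial (Fin n ⊕ Fin n) ℂ) :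
    (∀ (σ : Equiv.Perm (Fin n)) (a : Fin n → ℂ), (∀ i, a i ^ m = 1) →
      ∀ v : Fin n ⊕ Fin n → ℂ,
        eval (Sum.elim (fun i => a i * v (Sum.inl (σ⁻¹ i)))
          (fun i => (a i)⁻¹ * v (Sum.inr (σ⁻¹ i)))) P = eval v P) ↔
    P ∈ Algebra.adjoin ℂ {q : MvPolynomial (Fin n ⊕ Fin n) ℂ |
      ∃ r s : ℕ, r ≡ s [MOD m] ∧
        q = ∑ i : Fin n,
          (X (Sum.inl i) : MvPolynomial (Fin n ⊕ Fin n) ℂ) ^ r * X (Sum.inr i) ^ s} := by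
  constructor
  · intro hinv
    -- permutation invariance
    have hperm : ∀ σ : Equiv.Perm (Fin n), rename (Sum.map ⇑σ ⇑σ) P = P := by
      intro σ
      apply MvPolynomial.funext
      intro v
      rw [eval_rename]
      have h := hinv σ⁻¹ (fun _ => 1) (fun _ => one_pow m) v
      have hfun : Sum.elim (fun i => (1:ℂ) * v (Sum.inl ((σ⁻¹)⁻¹ i)))
          (fun i => ((1:ℂ))⁻¹ * v (Sum.inr ((σ⁻¹)⁻¹ i))) = v ∘ Sum.map ⇑σ ⇑σ := by
        funext x
        cases x <;> simp
      rw [hfun] at h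
      exact h
    -- support congruence
    have hsupp : ∀ d ∈ P.support, ∀ j : Fin n, d (Sum.inl j) ≡ d (Sum.inr j) [MOD m] := by
      intro d hd j
      set ζ : ℂ := Complex.exp (2 * Real.pi * Complex.I / m) with hζdef
      have hζ : IsPrimitiveRoot ζ m := Complex.isPrimitiveRoot_exp m hm.ne'
      set a : Fin n → ℂ := fun i => if i = j then ζ else 1 with hadef
      have ha : ∀ i, a i ^ m = 1 := by
        intro i
        by_cases h : i = j <;> simp [hadef, h, hζ.pow_eq_one]
      set g : (Fin n ⊕ Fin n) → MvPolynomial (Fin n ⊕ Fin n) ℂ :=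
        Sum.elim (fun i => C (a i) * X (Sum.inl i)) (fun i => C (a i)⁻¹ * X (Sum.inr i))
        with hgdef
      have hbind : bind₁ g P = P := by
        apply MvPolynomial.funext
        intro v
        have h1 : eval v (bind₁ g P) = eval (fun x => eval v (g x)) P := by
          simpa using aeval_bind₁ (R := ℂ) (S := ℂ) v g P
        rw [h1]
        have h2 := hinv 1 a ha v
        have hfun : Sum.elim (fun i => a i * v (Sum.inl (((1 : Equiv.Perm (Fin n)))⁻¹ i)))
            (fun i => (a i)⁻¹ * v (Sum.inr (((1 : Equiv.Perm (Fin n)))⁻¹ i)))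
            = fun x => eval v (g x) := by
          funext x
          cases x <;> simp [hgdef]
        rw [hfun] at h2
        exact h2
      have hco : coeff d P * (∏ i : Fin n, a i ^ d (Sum.inl i) * (a i)⁻¹ ^ d (Sum.inr i))
          = coeff d P := by
        calc coeff d P * (∏ i : Fin n, a i ^ d (Sum.inl i) * (a i)⁻¹ ^ d (Sum.inr i))
            = coeff d (bind₁ g P) := by
              conv_rhs => rw [show P = ∑ d' ∈ P.support, monomial d' (coeff d' P) from
                (support_sum_monomial_coeff P).symm]
              rw [map_sum, coeff_sum]
              simp only [hgdef, bind₁_scale, coeff_monomial]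
              rw [Finset.sum_ite_eq' P.support d
                (fun d' => coeff d' P * ∏ i : Fin n, a i ^ d' (Sum.inl i) * (a i)⁻¹ ^ d' (Sum.inr i))]
              rw [if_pos hd]
          _ = coeff d P := by rw [hbind]
      have hne : coeff d P ≠ 0 := mem_support_iff.1 hd
      have hu : (∏ i : Fin n, a i ^ d (Sum.inl i) * (a i)⁻¹ ^ d (Sum.inr i)) = 1 :=
        mul_left_cancel₀ hne (by rw [mul_one]; exact hco)
      have hprod : (∏ i : Fin n, a i ^ d (Sum.inl i) * (a i)⁻¹ ^ d (Sum.inr i))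
          = ζ ^ d (Sum.inl j) * (ζ⁻¹) ^ d (Sum.inr j) := by
        rw [Finset.prod_eq_single j (fun i _ hij => by simp [hadef, hij])
          (fun h => absurd (Finset.mem_univ j) h)]
        simp [hadef]
      rw [hprod] at hu
      have hζ0 : ζ ≠ 0 := hζ.ne_zero hm.ne'
      have hpp : ζ ^ d (Sum.inl j) = ζ ^ d (Sum.inr j) := by
        rw [inv_pow] at hu
        field_simp at hu
        exact hu
      have key : ∀ p q : ℕ, p ≤ q → ζ ^ p = ζ ^ q → p ≡ q [MOD m] := by
        intro p q hpq he
        have h1 : ζ ^ (q - p) = 1 := by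
          have h2 : ζ ^ p * ζ ^ (q - p) = ζ ^ p * 1 := by
            rw [mul_one, ← pow_add, Nat.add_sub_cancel' hpq, he]
          exact mul_left_cancel₀ (pow_ne_zero _ hζ0) h2
        exact (Nat.modEq_iff_dvd' hpq).2 ((hζ.pow_eq_one_iff_dvd _).1 h1)
      rcases le_total (d (Sum.inl j)) (d (Sum.inr j)) with h | h
      · exact key _ _ h hpp
      · exact (key _ _ h hpp.symm).symm
    -- assembly
    have hfac : ((n.factorial : ℂ)) ≠ 0 := by
      exact_mod_cast Nat.cast_ne_zero.2 (Nat.factorial_ne_zero n)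
    have hsum : (n.factorial : ℂ) • P
        = ∑ d ∈ P.support, coeff d P •
            Msum n n (fun i => d (Sum.inl i)) (fun i => d (Sum.inr i)) := by
      have h1 : ∑ σ : Equiv.Perm (Fin n), rename (Sum.map ⇑σ ⇑σ) P = (n.factorial : ℂ) • P := by
        rw [Finset.sum_congr rfl fun σ _ => hperm σ]
        rw [Finset.sum_const, Finset.card_univ, Fintype.card_perm, Fintype.card_fin]
        rw [Nat.cast_smul_eq_nsmul]
      rw [← h1]
      conv_lhs => rw [show P = ∑ d' ∈ P.support, monomial d' (coeff d' P) from
        (support_sum_monomial_coeff P).symm]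
      simp only [map_sum]
      rw [Finset.sum_comm]
      exact Finset.sum_congr rfl fun d _ => sum_rename_monomial n d (coeff d P)
    have hP : P = ((n.factorial : ℂ))⁻¹ • ((n.factorial : ℂ) • P) := by
      rw [smul_smul, inv_mul_cancel₀ hfac, one_smul]
    rw [hP, hsum]
    refine Subalgebra.smul_mem _ (sum_mem fun d hd => Subalgebra.smul_mem _ ?_ _) _
    exact Msum_mem m n n _ _ fun j => hsupp d hd j
  · intro hP σ a ha v
    have hpow : ∀ x : ℂ, x ^ m = 1 → ∀ r s : ℕ, r ≡ s [MOD m] → x ^ r * (x⁻¹) ^ s = 1 := by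
      intro x hx r s hrs
      have hx0 : x ≠ 0 := by
        intro h
        rw [h, zero_pow hm.ne'] at hx
        exact zero_ne_one hx
      have hmod : ∀ t : ℕ, x ^ t = x ^ (t % m) := by
        intro t
        conv_lhs => rw [← Nat.mod_add_div t m]
        rw [pow_add, pow_mul, hx, one_pow, mul_one]
      rw [inv_pow, hmod r, hmod s, hrs]
      exact mul_inv_cancel₀ (pow_ne_zero _ hx0)
    induction hP using Algebra.adjoin_induction with
    | mem q hq =>
      obtain ⟨r, s, hrs, rfl⟩ := hq
      simp only [map_sum, map_mul, map_pow, eval_X, Sum.elim_inl, Sum.elim_inr]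
      have hterm : ∀ i : Fin n,
          (a i * v (Sum.inl (σ⁻¹ i))) ^ r * ((a i)⁻¹ * v (Sum.inr (σ⁻¹ i))) ^ s
            = v (Sum.inl (σ⁻¹ i)) ^ r * v (Sum.inr (σ⁻¹ i)) ^ s := by
        intro i
        rw [mul_pow, mul_pow]
        have := hpow (a i) (ha i) r s hrs
        calc a i ^ r * v (Sum.inl (σ⁻¹ i)) ^ r * ((a i)⁻¹ ^ s * v (Sum.inr (σ⁻¹ i)) ^ s)
            = (a i ^ r * (a i)⁻¹ ^ s) * (v (Sum.inl (σ⁻¹ i)) ^ r * v (Sum.inr (σ⁻¹ i)) ^ s) := by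
              ring
          _ = v (Sum.inl (σ⁻¹ i)) ^ r * v (Sum.inr (σ⁻¹ i)) ^ s := by rw [this, one_mul]
      rw [Finset.sum_congr rfl fun i _ => hterm i]
      exact Equiv.sum_comp σ⁻¹ (fun i => v (Sum.inl i) ^ r * v (Sum.inr i) ^ s)
    | algebraMap c => simp [algebraMap_eq]
    | add x y _ _ hx hy => simp only [map_add, hx, hy]
    | mul x y _ _ hx hy => simp only [map_mul, hx, hy]
end

section
/- The G_1-saturation of L_1 × L_1 is Zariski dense in Z_1 = {(x_1,...,x_m,y_1,...,y_m) ∈ C^{2m} : x_1y_1 = ··· = x_my_m}; consequently, any G_1-invariant polynomial on Z_1 vanishing on L_1 × L_1 = {(d,...,d,e,...,e)} vanishes on all of Z_1. -/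
/-! Off the divisor `x₁ ⋯ x_m = 0`, a point of `Z₁` is in the `G₁`-orbit of a point of `L₁ × L₁`:
choose `d` with `d^m = x₁ ⋯ x_m`; the ratios `d / xᵢ` then multiply to `1` around the cycle, so
they are the successive quotients `g_{i+1} / gᵢ` of some `g ∈ G₁`. A point of `Z₁` on the divisor
has all `xᵢyᵢ = 0`, and it is the value at `ε = 0` of a polynomial curve in `Z₁` with
`xᵢyᵢ = ε²` and all `xᵢ ≠ 0` for `ε ≠ 0`. A polynomial vanishing on the saturation therefore
vanishes along that curve except at one point, hence everywhere on it. -/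

open MvPolynomial

/-- The Zariski topology on `ℂ^{2m}` (coordinates indexed by `Fin m ⊕ Fin m`). -/
def zariskiDouble (m : ℕ) : TopologicalSpace (Fin m ⊕ Fin m → ℂ) :=
  TopologicalSpace.generateFrom
    {U | ∃ p : MvPolynomial (Fin m ⊕ Fin m) ℂ, U = {v | eval v p ≠ 0}}

/-- `Z₁ ⊆ ℂ^{2m}`: the zero set of the moment map for dimension vector `δ`,
cut out by `x₁y₁ = x₂y₂ = ⋯ = x_my_m`. -/
def Zone (m : ℕ) : Set (Fin m ⊕ Fin m → ℂ) :=
  {v | ∀ i j : Fin m, v (Sum.inl i) * v (Sum.inr i) = v (Sum.inl j) * v (Sum.inr j)}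

/-- The action of `G₁ = (ℂˣ)^m` on `ℂ^{2m}`:
`x_i ↦ (g (i+1))⁻¹ x_i g_i`, `y_i ↦ (g i)⁻¹ y_i g_{i+1}` (indices mod `m`). -/
noncomputable def actOne (m : ℕ) [NeZero m] (g : Fin m → ℂˣ) (v : Fin m ⊕ Fin m → ℂ) :
    Fin m ⊕ Fin m → ℂ :=
  Sum.elim (fun i => ((g (i + 1) : ℂ))⁻¹ * v (Sum.inl i) * (g i : ℂ))
    (fun i => ((g i : ℂ))⁻¹ * v (Sum.inr i) * (g (i + 1) : ℂ))

open TopologicalSpace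

section Zariski

variable {σ K : Type*} [CommRing K]

abbrev zariski (σ K : Type*) [CommRing K] : TopologicalSpace (σ → K) :=
  generateFrom {U | ∃ p : MvPolynomial σ K, U = {v | eval v p ≠ 0}}

lemma isTopologicalBasis_zariski [IsDomain K] :
    @IsTopologicalBasis (σ → K) (zariski σ K)
      {U | ∃ p : MvPolynomial σ K, U = {v | eval v p ≠ 0}} := by
  let := zariski σ K
  refine .mk ?_ ?_ rfl
  · rintro _ ⟨p, rfl⟩ _ ⟨q, rfl⟩ v hv
    exact ⟨_, ⟨p * q, rfl⟩, by simpa using hv, fun w hw => by simpa using hw⟩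
  · exact Set.sUnion_eq_univ_iff.2 fun v => ⟨_, ⟨1, rfl⟩, by simp⟩

theorem dense_zariski_subtype_iff [IsDomain K] {Z : Set (σ → K)} {S : Set Z} :
    @Dense Z (@instTopologicalSpaceSubtype _ _ (zariski σ K)) S ↔
      ∀ p : MvPolynomial σ K, (∀ s ∈ S, eval (s : σ → K) p = 0) →
        ∀ z : Z, eval (z : σ → K) p = 0 := by
  let := zariski σ K
  rw [(isTopologicalBasis_zariski.isInducing Topology.IsInducing.subtypeVal).dense_iff]
  simp only [Set.forall_mem_image, Set.mem_ofPred_eq, forall_exists_index,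
    forall_eq_apply_imp_iff]
  refine forall_congr' fun p => ?_
  simp only [Set.Nonempty, Set.mem_inter_iff, Set.mem_preimage, Set.mem_ofPred_eq]
  constructor
  · intro h hS z
    by_contra hz
    obtain ⟨s, hs, hsS⟩ := h ⟨z, hz⟩
    exact hs (hS s hsS)
  · rintro h ⟨z, hz⟩
    by_contra! hS
    exact hz (h (fun s hs => by_contra fun h' => hS s h' hs) z)

theorem eval_polynomial_eval_eq_aeval (c : σ → Polynomial K) (p : MvPolynomial σ K) (ε : K) :
    eval (fun k => (c k).eval ε) p = (aeval c p).eval ε := by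
  rw [aeval_def, ← Polynomial.coe_evalRingHom, eval₂_comp_left, Polynomial.algebraMap_eq,
    Polynomial.evalRingHom, Polynomial.eval₂RingHom_comp_C]
  rfl

theorem eval_curve_eq_zero_of_eventually [IsDomain K] [Infinite K] (c : σ → Polynomial K)
    {p : MvPolynomial σ K} (h : ∀ᶠ ε in Filter.cofinite, eval (fun k => (c k).eval ε) p = 0)
    (a : K) : eval (fun k => (c k).eval a) p = 0 := by
  simp only [eval_polynomial_eval_eq_aeval] at h ⊢
  suffices aeval c p = 0 by rw [this, Polynomial.eval_zero]
  exact Polynomial.eq_zero_of_infinite_isRoot _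
    (Filter.frequently_cofinite_iff_infinite.1 h.frequently)

end Zariski

theorem Fin.exists_forall_add_one_eq_mul {M : Type*} [CommMonoid M] {m : ℕ} [NeZero m]
    (u : Fin m → M) (hu : ∏ i, u i = 1) : ∃ g : Fin m → M, ∀ i, g (i + 1) = g i * u i := by
  obtain ⟨n, rfl⟩ := Nat.exists_eq_succ_of_ne_zero (NeZero.ne m)
  refine ⟨fun i => Fin.partialProd u i.castSucc, fun i => ?_⟩
  induction i using Fin.lastCases with
  | last =>
    dsimp only
    rw [Fin.last_add_one, Fin.castSucc_zero, Fin.partialProd_zero, ← Fin.partialProd_succ,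
      Fin.succ_last, Fin.partialProd, List.take_of_length_le (by simp), List.prod_ofFn, hu]
  | cast j =>
    dsimp only
    rw [Fin.coeSucc_eq_succ, ← Fin.succ_castSucc, Fin.partialProd_succ]

section PairCurve

variable {K : Type*} [Field K]

open Classical in
noncomputable def pairCurve (a b : K) : Polynomial K × Polynomial K :=
  if a ≠ 0 then (.C a, .C a⁻¹ * .X ^ 2)
  else if b ≠ 0 then (.C b⁻¹ * .X ^ 2, .C b) else (.X, .X)

lemma pairCurve_fst_mul_snd (a b : K) : (pairCurve a b).1 * (pairCurve a b).2 = .X ^ 2 := by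
  unfold pairCurve
  split_ifs with ha hb
  · rw [← mul_assoc, ← Polynomial.C_mul, mul_inv_cancel₀ ha, Polynomial.C_1, one_mul]
  · rw [mul_comm, ← mul_assoc, ← Polynomial.C_mul, mul_inv_cancel₀ hb, Polynomial.C_1, one_mul]
  · ring

lemma eval_zero_pairCurve {a b : K} (h : a * b = 0) :
    (pairCurve a b).1.eval 0 = a ∧ (pairCurve a b).2.eval 0 = b := by
  unfold pairCurve
  split_ifs with ha hb <;> simp_all

lemma eval_pairCurve_fst_ne_zero (a b : K) {ε : K} (hε : ε ≠ 0) :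
    (pairCurve a b).1.eval ε ≠ 0 := by
  unfold pairCurve
  split_ifs with ha hb <;> simp_all

end PairCurve

section Saturation

lemma const_mem_zone {m : ℕ} (d e : ℂ) : Sum.elim (fun _ : Fin m => d) (fun _ => e) ∈ Zone m :=
  fun _ _ => rfl

variable {m : ℕ} [NeZero m]

lemma actOne_mem_zone (g : Fin m → ℂˣ) {v : Fin m ⊕ Fin m → ℂ} (hv : v ∈ Zone m) :
    actOne m g v ∈ Zone m := by
  have (k : Fin m) : (g (k + 1) : ℂ)⁻¹ * v (.inl k) * g k * ((g k : ℂ)⁻¹ * v (.inr k) * g (k + 1))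
      = v (.inl k) * v (.inr k) := by
    field_simp
  intro i j
  simp only [actOne, Sum.elim_inl, Sum.elim_inr, this, hv i j]

lemma exists_actOne_eq_of_ne_zero {w : Fin m ⊕ Fin m → ℂ} (hw : w ∈ Zone m)
    (hx : ∀ i, w (.inl i) ≠ 0) :
    ∃ (g : Fin m → ℂˣ) (d e : ℂ), w = actOne m g (Sum.elim (fun _ => d) fun _ => e) := by
  obtain ⟨d, hd⟩ := IsAlgClosed.exists_pow_nat_eq (∏ i, w (.inl i)) (NeZero.pos m)
  have hd0 : d ≠ 0 := by
    rintro rfl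
    exact Finset.prod_ne_zero_iff.2 (fun i _ => hx i) (by rw [← hd, zero_pow (NeZero.ne m)])
  obtain ⟨g, hg⟩ := Fin.exists_forall_add_one_eq_mul
    (fun i => Units.mk0 (d / w (.inl i)) (div_ne_zero hd0 (hx i))) (by
      ext
      simp [Finset.prod_div_distrib, hd, Finset.prod_ne_zero_iff.2 fun i _ => hx i])
  refine ⟨g, d, w (.inl 0) * w (.inr 0) / d, funext ?_⟩
  rintro (i | i) <;>
    simp only [actOne, Sum.elim_inl, Sum.elim_inr, hg, Units.val_mul, Units.val_mk0]
  · field_simp [hx i]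
  · rw [← hw i 0]
    field_simp [hx i]

lemma eval_eq_zero_of_forall_actOne {p : MvPolynomial (Fin m ⊕ Fin m) ℂ}
    (hp : ∀ (g : Fin m → ℂˣ) (d e : ℂ),
      eval (actOne m g (Sum.elim (fun _ => d) fun _ => e)) p = 0)
    {v : Fin m ⊕ Fin m → ℂ} (hv : v ∈ Zone m) : eval v p = 0 := by
  by_cases hx : ∀ i, v (.inl i) ≠ 0
  · obtain ⟨g, d, e, rfl⟩ := exists_actOne_eq_of_ne_zero hv hx
    exact hp g d e
  push Not at hx
  obtain ⟨i₀, hi₀⟩ := hx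
  have hxy (i : Fin m) : v (.inl i) * v (.inr i) = 0 := by rw [hv i i₀, hi₀, zero_mul]
  let c : Fin m ⊕ Fin m → Polynomial ℂ :=
    Sum.elim (fun i => (pairCurve (v (.inl i)) (v (.inr i))).1)
      (fun i => (pairCurve (v (.inl i)) (v (.inr i))).2)
  have hc₀ : (fun k => (c k).eval 0) = v := by
    funext k
    rcases k with i | i
    exacts [(eval_zero_pairCurve (hxy i)).1, (eval_zero_pairCurve (hxy i)).2]
  rw [← hc₀]
  refine eval_curve_eq_zero_of_eventually c
    ((Filter.eventually_cofinite_ne 0).mono fun ε hε => ?_) 0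
  have hzone : (fun k => (c k).eval ε) ∈ Zone m := fun i j => by
    simp only [c, Sum.elim_inl, Sum.elim_inr, ← Polynomial.eval_mul, pairCurve_fst_mul_snd]
  obtain ⟨g, d, e, he⟩ :=
    exists_actOne_eq_of_ne_zero hzone fun i => eval_pairCurve_fst_ne_zero _ _ hε
  rw [he]
  exact hp g d e

end Saturation

/-- The `G₁`-saturation of `L₁ × L₁ = {(d,…,d,e,…,e)}` is Zariski
dense in `Z₁`; consequently any `G₁`-invariant polynomial on `Z₁` vanishing on
`L₁ × L₁` vanishes on all of `Z₁`. -/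
theorem stmt_12 (m : ℕ) [NeZero m] :
    @Dense (Zone m) (@instTopologicalSpaceSubtype _ _ (zariskiDouble m))
      {v : Zone m | ∃ (g : Fin m → ℂˣ) (d e : ℂ),
        (v : Fin m ⊕ Fin m → ℂ) =
          actOne m g (Sum.elim (fun _ => d) (fun _ => e))} ∧
    (∀ f : MvPolynomial (Fin m ⊕ Fin m) ℂ,
      (∀ (g : Fin m → ℂˣ) (v : Fin m ⊕ Fin m → ℂ), v ∈ Zone m →
        eval (actOne m g v) f = eval v f) →
      (∀ d e : ℂ, eval (Sum.elim (fun _ : Fin m => d) (fun _ : Fin m => e)) f = 0) →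
      ∀ v ∈ Zone m, eval v f = 0) := by
  refine ⟨dense_zariski_subtype_iff.2 fun p hp v => ?_, fun f hinv hvan v hv => ?_⟩
  · refine eval_eq_zero_of_forall_actOne (fun g d e => ?_) v.2
    exact hp ⟨_, actOne_mem_zone g (const_mem_zone d e)⟩ ⟨g, d, e, rfl⟩
  · refine eval_eq_zero_of_forall_actOne (fun g d e => ?_) hv
    rw [hinv g _ (const_mem_zone d e), hvan]
end
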